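/- Let S be a semigroup, T a subsemigroup of S, and H a T-relative ℋ-class of S (H may lie in T or in S \ T). If T is finitely generated and the ℛ^T-class of S containing H is a union of finitely many ℋ^T-classes, then the relative Schützenberger group Γ(H) = Stab(H)/γ(H) is finitely generated; concretely, there is a finite subset X ⊆ Stab(H) such that every element of Stab(H) is γ(H)-equivalent to a product of elements of X. -/
import Mathlib


namespace GreenIndexPaper

variable {S : Type*} [Semigroup S]

/-- The subset `u·T¹ = {u} ∪ uT` of `S` (equivalently, `u T¹` computed in `S¹`). -/
def rset (T : Subsemigroup S) (u : S) : Set S := insert u {x | ∃ t ∈ T, x = u * t}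

/-- The subset `T¹·u = {u} ∪ Tu` of `S`. -/
def lset (T : Subsemigroup S) (u : S) : Set S := insert u {x | ∃ t ∈ T, x = t * u}

/-- The relative Green relation `ℛ^T`. -/
def RrelT (T : Subsemigroup S) (u v : S) : Prop := rset T u = rset T v

/-- The relative Green relation `ℒ^T`. -/
def LrelT (T : Subsemigroup S) (u v : S) : Prop := lset T u = lset T v

/-- The relative Green relation `ℋ^T = ℛ^T ∩ ℒ^T`. -/
def HrelT (T : Subsemigroup S) (u v : S) : Prop := RrelT T u v ∧ LrelT T u v

/-- `H` is an `ℋ^T`-class of `S`. -/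
def IsHClassIn (T : Subsemigroup S) (H : Set S) : Prop := ∃ a : S, H = {x | HrelT T a x}

/-- `T` has finite Green index in `S`: the complement `S \ T` is a union of finitely many
`ℋ^T`-classes. -/
def FiniteGreenIndex (T : Subsemigroup S) : Prop :=
  ∃ F : Finset S, (∀ c ∈ F, c ∉ T) ∧ ∀ s : S, s ∉ T → ∃ c ∈ F, HrelT T s c

/-- The subset `T¹ = T ∪ {1}` of `S¹ = WithOne S`. -/
def T1 (T : Subsemigroup S) : Set (WithOne S) := insert 1 ((↑) '' (T : Set S))

/-- The subset `H·t` of `S¹`, for `H ⊆ S` and `t ∈ S¹`. -/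
def setMulR (H : Set S) (t : WithOne S) : Set (WithOne S) :=
  {x | ∃ h ∈ H, x = (h : WithOne S) * t}

/-- The stabilizer `Stab(H) = {t ∈ T¹ : Ht = H}`, as a subset of `S¹`. -/
def stabSet (T : Subsemigroup S) (H : Set S) : Set (WithOne S) :=
  {t | t ∈ T1 T ∧ setMulR H t = (↑) '' H}

theorem one_mem_stabSet (T : Subsemigroup S) (H : Set S) : (1 : WithOne S) ∈ stabSet T H := by
  refine ⟨Set.mem_insert _ _, ?_⟩
  ext x
  constructor
  · rintro ⟨h, hh, rfl⟩
    exact ⟨h, hh, (mul_one _).symm⟩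
  · rintro ⟨h, hh, rfl⟩
    exact ⟨h, hh, (mul_one _).symm⟩

theorem mul_mem_stabSet {T : Subsemigroup S} {H : Set S} {s t : WithOne S}
    (hs : s ∈ stabSet T H) (ht : t ∈ stabSet T H) : s * t ∈ stabSet T H := by
  obtain ⟨hsT, hsH⟩ := hs
  obtain ⟨htT, htH⟩ := ht
  constructor
  · rcases hsT with rfl | ⟨s', hs', rfl⟩
    · rwa [one_mul]
    · rcases htT with rfl | ⟨t', ht', rfl⟩
      · rw [mul_one]; exact Or.inr ⟨s', hs', rfl⟩
      · exact Or.inr ⟨s' * t', T.mul_mem hs' ht', rfl⟩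
  · ext x
    constructor
    · rintro ⟨h, hh, rfl⟩
      have h1 : (h : WithOne S) * s ∈ setMulR H s := ⟨h, hh, rfl⟩
      rw [hsH] at h1
      obtain ⟨g, hg, hgs⟩ := h1
      have h2 : (g : WithOne S) * t ∈ setMulR H t := ⟨g, hg, rfl⟩
      rw [htH] at h2
      obtain ⟨k, hk, hkt⟩ := h2
      refine ⟨k, hk, ?_⟩
      rw [hkt, hgs, ← mul_assoc]
    · rintro ⟨k, hk, rfl⟩
      have h2 : ((k : WithOne S)) ∈ setMulR H t := by
        rw [htH]; exact ⟨k, hk, rfl⟩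
      obtain ⟨g, hg, hgt⟩ := h2
      have h1 : ((g : WithOne S)) ∈ setMulR H s := by
        rw [hsH]; exact ⟨g, hg, rfl⟩
      obtain ⟨h, hh, hhs⟩ := h1
      exact ⟨h, hh, by rw [hgt, hhs, mul_assoc]⟩

/-- The stabilizer `Stab(H)` as a submonoid of `S¹`. -/
def stabSubmonoid (T : Subsemigroup S) (H : Set S) : Submonoid (WithOne S) where
  carrier := stabSet T H
  one_mem' := one_mem_stabSet T H
  mul_mem' := mul_mem_stabSet

/-- The Schützenberger congruence `γ(H)` on `Stab(H)`. -/
def gammaCon (T : Subsemigroup S) (H : Set S) : Con (stabSubmonoid T H) where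
  r x y := ∀ h ∈ H, (h : WithOne S) * (x : WithOne S) = (h : WithOne S) * (y : WithOne S)
  iseqv := ⟨fun _ _ _ => rfl, fun hxy h hh => (hxy h hh).symm,
    fun h1 h2 h hh => (h1 h hh).trans (h2 h hh)⟩
  mul' := by
    rintro ⟨w, hwT, hwH⟩ ⟨x, hxT, hxH⟩ ⟨y, hyT, hyH⟩ ⟨z, hzT, hzH⟩ hwx hyz h hh
    have h1 : (h : WithOne S) * w ∈ setMulR H w := ⟨h, hh, rfl⟩
    rw [hwH] at h1
    obtain ⟨g, hg, hgw⟩ := h1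
    have key : (h : WithOne S) * (w * y) = (h : WithOne S) * (x * z) := by
      calc (h : WithOne S) * (w * y) = ((h : WithOne S) * w) * y := by rw [mul_assoc]
        _ = (g : WithOne S) * y := by rw [hgw]
        _ = (g : WithOne S) * z := hyz g hg
        _ = ((h : WithOne S) * w) * z := by rw [hgw]
        _ = ((h : WithOne S) * x) * z := by rw [hwx h hh]
        _ = (h : WithOne S) * (x * z) := by rw [mul_assoc]
    exact key

/-- The relative Schützenberger group `Γ(H) = Stab(H)/γ(H)`. -/
abbrev SchGroup (T : Subsemigroup S) (H : Set S) := (gammaCon T H).Quotient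

/-- Representatives `h_i` for `i ∈ I¹ = I ∪ {1}`, with `h_1 = 1 ∈ S¹`. -/
def repOne {ι : Type*} (h : ι → S) : Option ι → WithOne S :=
  fun o => o.elim 1 fun i => (h i : WithOne S)

/-- `S` is finitely presented as a semigroup. -/
def SemigroupFP (S : Type*) [Semigroup S] : Prop :=
  ∃ (n : ℕ) (π : FreeSemigroup (Fin n) →ₙ* S), Function.Surjective π ∧
    ∃ R : Finset (FreeSemigroup (Fin n) × FreeSemigroup (Fin n)),
      ∀ u v, (conGen fun x y => (x, y) ∈ R) u v ↔ π u = π v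

/-- `M` is finitely presented as a monoid. -/
def MonoidFP (M : Type*) [Monoid M] : Prop :=
  ∃ (n : ℕ) (π : FreeMonoid (Fin n) →* M), Function.Surjective π ∧
    ∃ R : Finset (FreeMonoid (Fin n) × FreeMonoid (Fin n)),
      ∀ u v, (conGen fun x y => (x, y) ∈ R) u v ↔ π u = π v

/-- A left ideal of a semigroup. -/
def IsLeftIdeal (L : Set S) : Prop := L.Nonempty ∧ ∀ s : S, ∀ x ∈ L, s * x ∈ L

/-- A right ideal of a semigroup. -/
def IsRightIdeal (R : Set S) : Prop := R.Nonempty ∧ ∀ s : S, ∀ x ∈ R, x * s ∈ R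

/-- Residual finiteness: distinct elements can be separated by a homomorphism
into a finite semigroup. -/
def ResiduallyFiniteMul (M : Type*) [Mul M] : Prop :=
  ∀ x y : M, x ≠ y → ∃ (F : Type) (_ : Semigroup F) (_ : Finite F) (φ : M →ₙ* F), φ x ≠ φ y

/-- `T` has finite Green index inside the subsemigroup `Ssub` of the ambient semigroup:
`Ssub \ T` is a union of finitely many `ℋ^T`-classes. -/
def FiniteGreenIndexIn (Ssub T : Subsemigroup S) : Prop :=
  ∃ F : Finset S, (∀ c ∈ F, c ∈ Ssub ∧ c ∉ T) ∧ ∀ s ∈ Ssub, s ∉ T → ∃ c ∈ F, HrelT T s c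

/-- A subsemigroup is a group under the induced operation. -/
def IsGroupSub (T : Subsemigroup S) : Prop :=
  ∃ e ∈ T, (∀ t ∈ T, e * t = t ∧ t * e = t) ∧ ∀ t ∈ T, ∃ t' ∈ T, t * t' = e ∧ t' * t = e

/-- The (out-)ball of radius `n`: elements expressible as a product of at most `n`
(and at least one) elements of `A`. -/
def ball (A : Finset S) (n : ℕ) : Set S :=
  {s | ∃ l : List S, l ≠ [] ∧ l.length ≤ n ∧ (∀ x ∈ l, x ∈ A) ∧
    (l.map ((↑) : S → WithOne S)).prod = (s : WithOne S)}

/-- The growth function of a semigroup with respect to a finite set `A`. -/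
noncomputable def growth (A : Finset S) (n : ℕ) : ℕ := (ball A n).ncard

end GreenIndexPaper

open GreenIndexPaper

namespace SchAux

variable {S : Type*} [Semigroup S] (T : Subsemigroup S)

/-- `u·T¹` computed inside `S¹ = WithOne S`. -/
def rM (u : WithOne S) : Set (WithOne S) := {x | ∃ p ∈ T1 T, x = u * p}

/-- `T¹·u` computed inside `S¹ = WithOne S`. -/
def lM (u : WithOne S) : Set (WithOne S) := {x | ∃ p ∈ T1 T, x = p * u}

def RM (u v : WithOne S) : Prop := rM T u = rM T v
def LM (u v : WithOne S) : Prop := lM T u = lM T v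
def HM (u v : WithOne S) : Prop := RM T u v ∧ LM T u v

variable {T}

lemma one_mem_T1 : (1 : WithOne S) ∈ T1 T := Set.mem_insert _ _

lemma coe_mem_T1 {t : S} (ht : t ∈ T) : (t : WithOne S) ∈ T1 T := Or.inr ⟨t, ht, rfl⟩

lemma mul_mem_T1 {x y : WithOne S} (hx : x ∈ T1 T) (hy : y ∈ T1 T) : x * y ∈ T1 T := by
  rcases hx with rfl | ⟨a, ha, rfl⟩
  · rwa [one_mul]
  · rcases hy with rfl | ⟨b, hb, rfl⟩
    · rw [mul_one]; exact Or.inr ⟨a, ha, rfl⟩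
    · exact Or.inr ⟨a * b, T.mul_mem ha hb, (WithOne.coe_mul a b).symm⟩

lemma mem_rM_self (u : WithOne S) : u ∈ rM T u := ⟨1, one_mem_T1, (mul_one u).symm⟩

lemma mem_lM_self (u : WithOne S) : u ∈ lM T u := ⟨1, one_mem_T1, (one_mul u).symm⟩

lemma rM_mono {u v : WithOne S} (h : v ∈ rM T u) : rM T v ⊆ rM T u := by
  obtain ⟨q, hq, rfl⟩ := h
  rintro x ⟨p, hp, rfl⟩
  exact ⟨q * p, mul_mem_T1 hq hp, mul_assoc u q p⟩

lemma lM_mono {u v : WithOne S} (h : v ∈ lM T u) : lM T v ⊆ lM T u := by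
  obtain ⟨q, hq, rfl⟩ := h
  rintro x ⟨p, hp, rfl⟩
  exact ⟨p * q, mul_mem_T1 hp hq, (mul_assoc p q u).symm⟩

lemma RM_of_mem {u v : WithOne S} (h1 : v ∈ rM T u) (h2 : u ∈ rM T v) : RM T u v :=
  Set.Subset.antisymm (rM_mono h2) (rM_mono h1)

lemma LM_of_mem {u v : WithOne S} (h1 : v ∈ lM T u) (h2 : u ∈ lM T v) : LM T u v :=
  Set.Subset.antisymm (lM_mono h2) (lM_mono h1)

lemma mem_of_RM {u v : WithOne S} (h : RM T u v) : v ∈ rM T u := h ▸ mem_rM_self v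

lemma mem_of_LM {u v : WithOne S} (h : LM T u v) : v ∈ lM T u := h ▸ mem_lM_self v

lemma HM.symm {u v : WithOne S} (h : HM T u v) : HM T v u := ⟨h.1.symm, h.2.symm⟩

lemma HM.trans {u v w : WithOne S} (h1 : HM T u v) (h2 : HM T v w) : HM T u w :=
  ⟨h1.1.trans h2.1, h1.2.trans h2.2⟩

lemma rM_coe (u : S) : rM T (u : WithOne S) = ((↑) : S → WithOne S) '' rset T u := by
  ext x
  constructor
  · rintro ⟨p, hp, rfl⟩
    rcases hp with rfl | ⟨t, ht, rfl⟩
    · exact ⟨u, Set.mem_insert _ _, (mul_one (u : WithOne S)).symm⟩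
    · exact ⟨u * t, Or.inr ⟨t, ht, rfl⟩, WithOne.coe_mul u t⟩
  · rintro ⟨s, hs, rfl⟩
    rcases hs with rfl | ⟨t, ht, rfl⟩
    · exact ⟨1, one_mem_T1, (mul_one _).symm⟩
    · exact ⟨t, coe_mem_T1 ht, (WithOne.coe_mul u t)⟩

lemma lM_coe (u : S) : lM T (u : WithOne S) = ((↑) : S → WithOne S) '' lset T u := by
  ext x
  constructor
  · rintro ⟨p, hp, rfl⟩
    rcases hp with rfl | ⟨t, ht, rfl⟩
    · exact ⟨u, Set.mem_insert _ _, (one_mul (u : WithOne S)).symm⟩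
    · exact ⟨t * u, Or.inr ⟨t, ht, rfl⟩, WithOne.coe_mul t u⟩
  · rintro ⟨s, hs, rfl⟩
    rcases hs with rfl | ⟨t, ht, rfl⟩
    · exact ⟨1, one_mem_T1, (one_mul _).symm⟩
    · exact ⟨t, coe_mem_T1 ht, (WithOne.coe_mul t u)⟩

lemma RrelT_iff_RM {u v : S} : RrelT T u v ↔ RM T (u : WithOne S) (v : WithOne S) := by
  constructor
  · intro h; unfold RM; rw [rM_coe, rM_coe, h]
  · intro h
    have h' : ((↑) : S → WithOne S) '' rset T u = ((↑) : S → WithOne S) '' rset T v := by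
      rw [← rM_coe, ← rM_coe]; exact h
    exact Set.image_injective.mpr (fun a b => WithOne.coe_inj.mp) h'

lemma LrelT_iff_LM {u v : S} : LrelT T u v ↔ LM T (u : WithOne S) (v : WithOne S) := by
  constructor
  · intro h; unfold LM; rw [lM_coe, lM_coe, h]
  · intro h
    have h' : ((↑) : S → WithOne S) '' lset T u = ((↑) : S → WithOne S) '' lset T v := by
      rw [← lM_coe, ← lM_coe]; exact h
    exact Set.image_injective.mpr (fun a b => WithOne.coe_inj.mp) h'

lemma HrelT_iff_HM {u v : S} : HrelT T u v ↔ HM T (u : WithOne S) (v : WithOne S) := by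
  unfold HrelT HM
  rw [RrelT_iff_RM, LrelT_iff_LM]

/-- If `w` is ℛ-related to a coercion, it is itself a coercion. -/
lemma exists_coe_of_RM_coe {a : S} {u : WithOne S} (h : RM T (a : WithOne S) u) :
    ∃ s : S, u = (s : WithOne S) := by
  have := mem_of_RM h
  rw [rM_coe] at this
  obtain ⟨s, _, rfl⟩ := this
  exact ⟨s, rfl⟩

/-- Retraction: with `c·r = d`, `d·r' = c`, right multiplication by `r·r'` fixes `lM c`. -/
lemma retract {c d r r' y : WithOne S} (hcd : c * r = d) (hdc : d * r' = c)
    (hy : y ∈ lM T c) : y * r * r' = y := by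
  obtain ⟨p, _, rfl⟩ := hy
  rw [mul_assoc p c r, hcd, mul_assoc p d r', hdc]

/-- Green's lemma, relative version: translation by `r` carries the `ℋ`-class of `c`
into the `ℋ`-class of `d`. -/
lemma transport {c d r r' y : WithOne S} (hr : r ∈ T1 T) (hr' : r' ∈ T1 T)
    (hcd : c * r = d) (hdc : d * r' = c) (hy : HM T c y) : HM T d (y * r) := by
  obtain ⟨p, hp, hpy⟩ := mem_of_LM hy.2
  obtain ⟨q, hq, hqc⟩ := mem_of_LM hy.2.symm
  have hyrr' : y * r * r' = y := retract hcd hdc (mem_of_LM hy.2)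
  constructor
  · -- RM d (y*r)
    have hRcd : RM T c d := RM_of_mem ⟨r, hr, hcd.symm⟩ ⟨r', hr', hdc.symm⟩
    have hRcy : RM T c y := hy.1
    refine RM_of_mem ?_ ?_
    · -- y*r ∈ rM d
      have : y * r ∈ rM T y := ⟨r, hr, rfl⟩
      have h2 : rM T y = rM T d := hRcy.symm.trans hRcd
      rwa [h2] at this
    · -- d ∈ rM (y*r)
      have hy_mem : y ∈ rM T (y * r) := ⟨r', hr', hyrr'.symm⟩
      have : d ∈ rM T y := by
        have : d ∈ rM T c := ⟨r, hr, hcd.symm⟩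
        rwa [hRcy] at this
      exact rM_mono hy_mem this
  · -- LM d (y*r)
    refine LM_of_mem ?_ ?_
    · exact ⟨p, hp, by rw [hpy, mul_assoc, hcd]⟩
    · exact ⟨q, hq, by rw [← hcd, hqc, mul_assoc]⟩

/-- Right multiplication by `b` carries the `ℋ`-class of `u` to that of `u·b`,
provided both stay in the ℛ-class of `a`. -/
lemma transport_right {a u b y : WithOne S} (hb : b ∈ T1 T)
    (hu : RM T a u) (huv : RM T a (u * b)) (hy : HM T u y) : HM T (u * b) (y * b) := by
  have h1 : RM T (u * b) u := huv.symm.trans hu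
  obtain ⟨d', hd', hd'eq⟩ := mem_of_RM h1
  exact transport hb hd' rfl hd'eq.symm hy

/-- Products of lists of generator coercions lie in `T¹`. -/
lemma list_prod_mem_T1 {B : Finset S} (hBT : (↑B : Set S) ⊆ (T : Set S)) :
    ∀ l : List S, (∀ x ∈ l, x ∈ B) → (l.map ((↑) : S → WithOne S)).prod ∈ T1 T := by
  intro l
  induction l with
  | nil => intro _; simpa using one_mem_T1
  | cons x xs ih =>
      intro h
      simp only [List.map_cons, List.prod_cons]
      exact mul_mem_T1 (coe_mem_T1 (hBT (h x (by simp)))) (ih fun y hy => h y (by simp [hy]))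

lemma exists_list_of_mem_closure {B : Finset S} {t : S}
    (ht : t ∈ Subsemigroup.closure (↑B : Set S)) :
    ∃ l : List S, l ≠ [] ∧ (∀ x ∈ l, x ∈ B) ∧
      (l.map ((↑) : S → WithOne S)).prod = (t : WithOne S) := by
  induction ht using Subsemigroup.closure_induction with
  | mem x hx => exact ⟨[x], by simp, by simpa using hx, by simp⟩
  | mul x y _ _ ihx ihy =>
      obtain ⟨l1, _, hl1B, hl1p⟩ := ihx
      obtain ⟨l2, _, hl2B, hl2p⟩ := ihy
      refine ⟨l1 ++ l2, by simp_all, ?_, ?_⟩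
      · intro z hz
        rcases List.mem_append.mp hz with h | h
        · exact hl1B z h
        · exact hl2B z h
      · rw [List.map_append, List.prod_append, hl1p, hl2p, WithOne.coe_mul]

end SchAux

open SchAux

/-- if `T` is finitely generated and the `ℛ^T`-class of `H` is a union of
finitely many `ℋ^T`-classes, then the Schützenberger group `Γ(H)` is finitely generated. -/
theorem schGroup_finitely_generated
    {S : Type*} [Semigroup S] (T : Subsemigroup S) (H : Set S) (hH : IsHClassIn T H)
    (hTfg : ∃ B : Finset S, (↑B : Set S) ⊆ (T : Set S) ∧
      Subsemigroup.closure (↑B : Set S) = T)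
    (hRfin : ∃ F : Finset S, ∀ s : S, (∃ a ∈ H, RrelT T a s) → ∃ c ∈ F, HrelT T s c) :
    ∃ X : Finset (WithOne S), (↑X : Set (WithOne S)) ⊆ stabSet T H ∧
      ∀ t ∈ stabSet T H, ∃ l : List (WithOne S), l ≠ [] ∧ (∀ x ∈ l, x ∈ X) ∧
        ∀ g ∈ H, (g : WithOne S) * t = (g : WithOne S) * l.prod := by
  classical
  obtain ⟨a, rfl⟩ := hH
  obtain ⟨B, hBT, hBgen⟩ := hTfg
  obtain ⟨F, hF⟩ := hRfin
  set H : Set S := {x | HrelT T a x} with hHdef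
  have ha : a ∈ H := ⟨rfl, rfl⟩
  have memH : ∀ {s : S}, s ∈ H ↔ HM T (a : WithOne S) (s : WithOne S) := by
    intro s; exact HrelT_iff_HM
  have coeH : ∀ {w : WithOne S}, HM T (a : WithOne S) w → ∃ g : S, w = ↑g ∧ g ∈ H := by
    intro w hw
    obtain ⟨s, rfl⟩ := exists_coe_of_RM_coe hw.1
    exact ⟨s, rfl, memH.mpr hw⟩
  -- representative choice
  have exrep : ∀ u : WithOne S, ∃ c : S,
      RM T (a : WithOne S) u → (c ∈ F ∧ HM T (c : WithOne S) u) := by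
    intro u
    by_cases h : RM T (a : WithOne S) u
    · obtain ⟨s, rfl⟩ := exists_coe_of_RM_coe h
      have hrs : RrelT T a s := RrelT_iff_RM.mpr h
      obtain ⟨c, hcF, hsc⟩ := hF s ⟨a, ha, hrs⟩
      exact ⟨c, fun _ => ⟨hcF, (HrelT_iff_HM.mp hsc).symm⟩⟩
    · exact ⟨a, fun h' => absurd h' h⟩
  choose crep hcrep using exrep
  -- translators
  have extr : ∀ c : S, ∃ r r' : WithOne S, RM T (a : WithOne S) (c : WithOne S) →
      (r ∈ T1 T ∧ r' ∈ T1 T ∧ (a : WithOne S) * r = (c : WithOne S) ∧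
        (c : WithOne S) * r' = (a : WithOne S)) := by
    intro c
    by_cases h : RM T (a : WithOne S) (c : WithOne S)
    · obtain ⟨r, hr, hr2⟩ := mem_of_RM h
      obtain ⟨r', hr', hr2'⟩ := mem_of_RM h.symm
      exact ⟨r, r', fun _ => ⟨hr, hr', hr2.symm, hr2'.symm⟩⟩
    · exact ⟨1, 1, fun h' => absurd h' h⟩
  choose rho rho' hrho using extr
  -- stabilizer membership lemmas
  have stab3 : ∀ (c c' : S) (b : WithOne S), b ∈ T1 T →
      RM T (a : WithOne S) (c : WithOne S) → RM T (a : WithOne S) (c' : WithOne S) →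
      HM T (c' : WithOne S) ((c : WithOne S) * b) →
      (rho c * b * rho' c') ∈ stabSet T H := by
    intro c c' b hb hc hc' hcb
    obtain ⟨hr1, hr2, hr3, hr4⟩ := hrho c hc
    obtain ⟨hs1, hs2, hs3, hs4⟩ := hrho c' hc'
    refine ⟨mul_mem_T1 (mul_mem_T1 hr1 hb) hs2, ?_⟩
    have hRcb : RM T (a : WithOne S) ((c : WithOne S) * b) := hc'.trans hcb.1
    ext x
    constructor
    · rintro ⟨g, hg, rfl⟩
      have hg' : HM T (a : WithOne S) (g : WithOne S) := memH.mp hg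
      have s1 : HM T (c : WithOne S) ((g : WithOne S) * rho c) :=
        transport hr1 hr2 hr3 hr4 hg'
      have s2 : HM T ((c : WithOne S) * b) ((g : WithOne S) * rho c * b) :=
        transport_right hb hc hRcb s1
      have s3 : HM T (c' : WithOne S) ((g : WithOne S) * rho c * b) := hcb.trans s2
      have s4 : HM T (a : WithOne S) ((g : WithOne S) * rho c * b * rho' c') :=
        transport hs2 hs1 hs4 hs3.symm.symm s3
      obtain ⟨g2, hgeq, hg2⟩ := coeH s4
      refine ⟨g2, hg2, ?_⟩
      rw [← hgeq, ← mul_assoc, ← mul_assoc]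
    · rintro ⟨g', hg', rfl⟩
      have hRc_cb : RM T ((c : WithOne S) * b) (c : WithOne S) := hRcb.symm.trans hc
      obtain ⟨d', hd'T, hd'eq⟩ := mem_of_RM hRc_cb
      have hg'H : HM T (a : WithOne S) (g' : WithOne S) := memH.mp hg'
      have u1 : HM T (c' : WithOne S) ((g' : WithOne S) * rho c') :=
        transport hs1 hs2 hs3 hs4 hg'H
      have u1' : HM T ((c : WithOne S) * b) ((g' : WithOne S) * rho c') := hcb.symm.trans u1
      have u2 : HM T (c : WithOne S) ((g' : WithOne S) * rho c' * d') :=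
        transport hd'T hb hd'eq.symm rfl u1'
      have u3 : HM T (a : WithOne S) ((g' : WithOne S) * rho c' * d' * rho' c) :=
        transport hr2 hr1 hr4 hr3 u2
      obtain ⟨g, hgeq, hgH⟩ := coeH u3
      refine ⟨g, hgH, ?_⟩
      have r1 : (g' : WithOne S) * rho c' * d' * rho' c * rho c
          = (g' : WithOne S) * rho c' * d' := retract hr4 hr3 (mem_of_LM u2.2)
      have r2 : (g' : WithOne S) * rho c' * d' * b = (g' : WithOne S) * rho c' :=
        retract hd'eq.symm rfl (mem_of_LM u1'.2)
      have r3 : (g' : WithOne S) * rho c' * rho' c' = (g' : WithOne S) :=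
        retract hs3 hs4 (mem_of_LM hg'H.2)
      calc (g' : WithOne S)
          = (g' : WithOne S) * rho c' * d' * b * rho' c' := by rw [r2, r3]
        _ = (g' : WithOne S) * rho c' * d' * rho' c * rho c * b * rho' c' := by rw [r1]
        _ = (g : WithOne S) * (rho c * b * rho' c') := by
            rw [← hgeq]; simp only [mul_assoc]
  have stabr : ∀ c : S, HM T (a : WithOne S) (c : WithOne S) → rho c ∈ stabSet T H := by
    intro c hc
    obtain ⟨hr1, hr2, hr3, hr4⟩ := hrho c hc.1
    refine ⟨hr1, ?_⟩
    ext x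
    constructor
    · rintro ⟨g, hg, rfl⟩
      have s1 : HM T (c : WithOne S) ((g : WithOne S) * rho c) :=
        transport hr1 hr2 hr3 hr4 (memH.mp hg)
      obtain ⟨g2, hgeq, hg2⟩ := coeH (hc.trans s1)
      exact ⟨g2, hg2, hgeq ▸ rfl⟩
    · rintro ⟨g', hg', rfl⟩
      have s1 : HM T (a : WithOne S) ((g' : WithOne S) * rho' c) :=
        transport hr2 hr1 hr4 hr3 (hc.symm.trans (memH.mp hg'))
      obtain ⟨g, hgeq, hgH⟩ := coeH s1
      refine ⟨g, hgH, ?_⟩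
      have r1 : (g' : WithOne S) * rho' c * rho c = (g' : WithOne S) :=
        retract hr4 hr3 (mem_of_LM (hc.symm.trans (memH.mp hg')).2)
      rw [← hgeq, r1]
  have stabr' : ∀ c : S, HM T (a : WithOne S) (c : WithOne S) → rho' c ∈ stabSet T H := by
    intro c hc
    obtain ⟨hr1, hr2, hr3, hr4⟩ := hrho c hc.1
    refine ⟨hr2, ?_⟩
    ext x
    constructor
    · rintro ⟨g, hg, rfl⟩
      have s1 : HM T (a : WithOne S) ((g : WithOne S) * rho' c) :=
        transport hr2 hr1 hr4 hr3 (hc.symm.trans (memH.mp hg))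
      obtain ⟨g2, hgeq, hg2⟩ := coeH s1
      exact ⟨g2, hg2, hgeq ▸ rfl⟩
    · rintro ⟨g', hg', rfl⟩
      have s1 : HM T (c : WithOne S) ((g' : WithOne S) * rho c) :=
        transport hr1 hr2 hr3 hr4 (memH.mp hg')
      obtain ⟨g, hgeq, hgH⟩ := coeH (hc.trans s1)
      refine ⟨g, hgH, ?_⟩
      have r1 : (g' : WithOne S) * rho c * rho' c = (g' : WithOne S) :=
        retract hr3 hr4 (mem_of_LM (memH.mp hg').2)
      rw [← hgeq, r1]
  -- the candidate generating set
  set cands : Finset (WithOne S) :=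
    ({1} : Finset (WithOne S)) ∪ F.image (fun c => rho c) ∪ F.image (fun c => rho' c) ∪
      (F ×ˢ (B ×ˢ F)).image (fun p => rho p.1 * (p.2.1 : WithOne S) * rho' p.2.2)
    with hcands
  set X : Finset (WithOne S) := cands.filter (fun x => x ∈ stabSet T H) with hX
  refine ⟨X, fun x hx => (Finset.mem_filter.mp hx).2, ?_⟩
  intro t ht
  rcases ht.1 with rfl | ⟨t0, ht0, rfl⟩
  · refine ⟨[1], by simp, ?_, by simp⟩
    intro x hx
    simp only [List.mem_singleton] at hx
    subst hx
    refine Finset.mem_filter.mpr ⟨?_, one_mem_stabSet T H⟩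
    simp [hcands]
  · have ht0' : t0 ∈ Subsemigroup.closure (↑B : Set S) := by rw [hBgen]; exact ht0
    obtain ⟨l, hlne, hlB, hlprod⟩ := exists_list_of_mem_closure ht0'
    have hmt0 : ((a : WithOne S) * (t0 : WithOne S)) ∈ (((↑) : S → WithOne S) '' H) := by
      rw [← ht.2]; exact ⟨a, ha, rfl⟩
    obtain ⟨g1, hg1H, hg1⟩ := hmt0
    have hHmt : HM T (a : WithOne S) ((a : WithOne S) * (t0 : WithOne S)) := by
      rw [← hg1]; exact memH.mp hg1H
    -- main induction on the generator word
    have main : ∀ l' : List S, (∀ x ∈ l', x ∈ B) →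
        RM T (a : WithOne S) ((a : WithOne S) * (l'.map ((↑) : S → WithOne S)).prod) →
        ∃ xs : List (WithOne S), (∀ x ∈ xs, x ∈ X) ∧
          (a : WithOne S) * xs.prod =
            (a : WithOne S) * (l'.map ((↑) : S → WithOne S)).prod *
              rho' (crep ((a : WithOne S) * (l'.map ((↑) : S → WithOne S)).prod)) := by
      intro l'
      induction l' using List.reverseRecOn with
      | nil =>
          intro _ hR
          simp only [List.map_nil, List.prod_nil, mul_one] at hR ⊢
          obtain ⟨hc0F, hc0H⟩ := hcrep (a : WithOne S) hR
          have hac0 : HM T (a : WithOne S) ((crep (a : WithOne S) : S) : WithOne S) :=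
            hc0H.symm
          refine ⟨[rho' (crep (a : WithOne S))], ?_, by simp⟩
          intro x hx
          simp only [List.mem_singleton] at hx
          subst hx
          refine Finset.mem_filter.mpr ⟨?_, stabr' _ hac0⟩
          simp only [hcands, Finset.mem_union]
          exact Or.inl (Or.inr (Finset.mem_image.mpr ⟨_, hc0F, rfl⟩))
      | append_singleton l2 b ih =>
          intro hB2 hR
          have hbB : b ∈ B := hB2 b (by simp)
          have hbT1 : (b : WithOne S) ∈ T1 T := coe_mem_T1 (hBT hbB)
          have hq : ((l2 ++ [b]).map ((↑) : S → WithOne S)).prod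
              = (l2.map ((↑) : S → WithOne S)).prod * (b : WithOne S) := by
            simp
          rw [hq] at hR ⊢
          rw [← mul_assoc (a : WithOne S) (l2.map ((↑) : S → WithOne S)).prod
            (b : WithOne S)] at hR ⊢
          set q2 : WithOne S := (l2.map ((↑) : S → WithOne S)).prod with hq2
          have hq2T1 : q2 ∈ T1 T := list_prod_mem_T1 hBT l2 (fun x hx => hB2 x (by simp [hx]))
          have hR' : RM T (a : WithOne S) ((a : WithOne S) * q2) := by
            refine RM_of_mem ⟨q2, hq2T1, rfl⟩ ?_
            have h1 : (a : WithOne S) * q2 * (b : WithOne S) ∈ rM T ((a : WithOne S) * q2) :=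
              ⟨(b : WithOne S), hbT1, rfl⟩
            exact rM_mono h1 (mem_of_RM hR.symm)
          obtain ⟨xs2, hxs2X, hxs2eq⟩ := ih (fun x hx => hB2 x (by simp [hx])) hR'
          obtain ⟨hc'F, hc'H⟩ := hcrep _ hR'
          obtain ⟨hc''F, hc''H⟩ := hcrep _ hR
          have hc'R : RM T (a : WithOne S) ((crep ((a : WithOne S) * q2) : S) : WithOne S) :=
            hR'.trans hc'H.1.symm
          have hc''R : RM T (a : WithOne S)
              ((crep ((a : WithOne S) * q2 * (b : WithOne S)) : S) : WithOne S) :=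
            hR.trans hc''H.1.symm
          obtain ⟨hr1, hr2, hr3, hr4⟩ := hrho _ hc'R
          have hstep : HM T ((crep ((a : WithOne S) * q2 * (b : WithOne S)) : S) : WithOne S)
              (((crep ((a : WithOne S) * q2) : S) : WithOne S) * (b : WithOne S)) := by
            have e2 := transport_right hbT1 hR' hR hc'H.symm
            exact hc''H.trans e2
          have hxstab := stab3 _ _ (b : WithOne S) hbT1 hc'R hc''R hstep
          refine ⟨xs2 ++ [rho (crep ((a : WithOne S) * q2)) * (b : WithOne S) *
            rho' (crep ((a : WithOne S) * q2 * (b : WithOne S)))], ?_, ?_⟩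
          · intro x hx
            rcases List.mem_append.mp hx with h | h
            · exact hxs2X x h
            · simp only [List.mem_singleton] at h
              subst h
              refine Finset.mem_filter.mpr ⟨?_, hxstab⟩
              simp only [hcands, Finset.mem_union]
              refine Or.inr (Finset.mem_image.mpr ⟨(crep ((a : WithOne S) * q2), b,
                crep ((a : WithOne S) * q2 * (b : WithOne S))), ?_, rfl⟩)
              simp [Finset.mem_product, hc'F, hbB, hc''F]
          · have hret : (a : WithOne S) * q2 * rho' (crep ((a : WithOne S) * q2)) *
                rho (crep ((a : WithOne S) * q2)) = (a : WithOne S) * q2 :=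
              retract hr4 hr3 (mem_of_LM hc'H.2)
            rw [List.prod_append, List.prod_singleton, ← mul_assoc, hxs2eq,
              ← mul_assoc, ← mul_assoc, hret]
    have hR0 : RM T (a : WithOne S)
        ((a : WithOne S) * (l.map ((↑) : S → WithOne S)).prod) := by
      rw [hlprod]; exact hHmt.1
    obtain ⟨xs, hxsX, hxseq⟩ := main l hlB hR0
    obtain ⟨hcF, hcH⟩ := hcrep _ hR0
    have hcHm : HM T (a : WithOne S)
        ((crep ((a : WithOne S) * (l.map ((↑) : S → WithOne S)).prod) : S) : WithOne S) := by
      refine hHmt.trans ?_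
      rw [← hlprod]
      exact hcH.symm
    obtain ⟨hr1, hr2, hr3, hr4⟩ := hrho _ hcHm.1
    refine ⟨xs ++ [rho (crep ((a : WithOne S) * (l.map ((↑) : S → WithOne S)).prod))],
      by simp, ?_, ?_⟩
    · intro x hx
      rcases List.mem_append.mp hx with h | h
      · exact hxsX x h
      · simp only [List.mem_singleton] at h
        subst h
        refine Finset.mem_filter.mpr ⟨?_, stabr _ hcHm⟩
        simp only [hcands, Finset.mem_union]
        exact Or.inl (Or.inl (Or.inr (Finset.mem_image.mpr ⟨_, hcF, rfl⟩)))
    · intro g hg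
      have key : (a : WithOne S) * (t0 : WithOne S) =
          (a : WithOne S) * (xs ++ [rho (crep ((a : WithOne S) *
            (l.map ((↑) : S → WithOne S)).prod))]).prod := by
        have hret : (a : WithOne S) * (l.map ((↑) : S → WithOne S)).prod *
            rho' (crep ((a : WithOne S) * (l.map ((↑) : S → WithOne S)).prod)) *
            rho (crep ((a : WithOne S) * (l.map ((↑) : S → WithOne S)).prod)) =
            (a : WithOne S) * (l.map ((↑) : S → WithOne S)).prod :=
          retract hr4 hr3 (mem_of_LM hcH.2)
        rw [List.prod_append, List.prod_singleton, ← mul_assoc, hxseq, hret, hlprod]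
      obtain ⟨p, hpT1, hpeq⟩ := mem_of_LM (memH.mp hg).2
      rw [hpeq, mul_assoc, key, mul_assoc]
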